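/- Let W:Ω²→[0,1] be a graphon with edge density e = ∫∫ W. Then the fractional vertex cover number satisfies τ*(W) ≥ min{√(e/4), 1 − √(1−e)}. -/

import Mathlib

open MeasureTheory Set

def IsGraphon {Ω : Type*} [MeasurableSpace Ω] (W : Ω → Ω → ℝ) : Prop :=
  Measurable (Function.uncurry W) ∧ (∀ x y, W x y = W y x) ∧ ∀ x y, W x y ∈ Set.Icc (0:ℝ) 1

def IsFracCover {Ω : Type*} [MeasurableSpace Ω] (ν : Measure Ω) (W : Ω → Ω → ℝ)
    (c : Ω → ℝ) : Prop :=
  Measurable c ∧ (∀ x, c x ∈ Set.Icc (0:ℝ) 1) ∧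
    ∀ᵐ p ∂(ν.prod ν), 0 < W p.1 p.2 → 1 ≤ c p.1 + c p.2

/-- The fractional vertex cover number: the infimum of sizes of fractional vertex covers. -/
noncomputable def fracCoverNumber {Ω : Type*} [MeasurableSpace Ω] (ν : Measure Ω)
    (W : Ω → Ω → ℝ) : ℝ :=
  sInf {r : ℝ | ∃ c : Ω → ℝ, IsFracCover ν W c ∧ r = ∫ x, c x ∂ν}

/-! Randomized threshold rounding: for `θ` uniform in `(0, 1]`, the half-integral function
`(1[θ ≤ c] + 1[1 - θ < c]) / 2` is again a cover and has expectation `c`, so every cover has a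
half-integral rounding of no larger size. A half-integral cover vanishing on a set of measure `z`
and equal to `1/2` on a set of measure `b` has size `1 - z - b/2`, and `W` vanishes a.e. on
`{c = 0} × {c ≤ 1/2} ∪ {c = 1/2} × {c = 0}`, so `e ≤ 1 - z (z + b) - b z`; minimizing the size under
this constraint gives the bound. -/

lemma min_sqrt_le_one_sub {z b e : ℝ} (hb : 0 ≤ b) (hzb : z + b ≤ 1)
    (he : e ≤ 1 - z * (z + b) - b * z) :
    min (√(e / 4)) (1 - √(1 - e)) ≤ 1 - z - b / 2 := by
  -- with `a = 1 - z - b` the hypothesis reads `e ≤ 2a - a² + b²`, and the size is `a + b/2`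
  set a := 1 - z - b
  have ha : 0 ≤ a := by linarith
  by_contra! hlt
  rw [lt_min_iff] at hlt
  obtain ⟨hlt₁, hlt₂⟩ := hlt
  have ht : 0 ≤ a + b / 2 := by linarith
  have h₁ : (2 * a + b) ^ 2 < e := by
    nlinarith [(Real.lt_sqrt (by linarith)).mp (show a + b / 2 < √(e / 4) by linarith)]
  have h₂ : 2 * (a + b / 2) - (a + b / 2) ^ 2 < e := by
    have := (Real.sqrt_lt' (by linarith [Real.sqrt_nonneg (1 - e)])).mp
      (show √(1 - e) < 1 - (a + b / 2) by linarith)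
    nlinarith
  have hx : a * (5 * a + 4 * b - 2) < 0 := by nlinarith
  have hy : b * (4 - 4 * a - 5 * b) < 0 := by nlinarith
  have h5 : 5 * a + 4 * b - 2 < 0 := by
    by_contra! h; nlinarith [mul_nonneg ha h]
  have h4 : 4 - 4 * a - 5 * b < 0 := by
    by_contra! h; nlinarith [mul_nonneg hb h]
  linarith

noncomputable def thresholdRound (θ u : ℝ) : ℝ :=
  ((if θ ≤ u then 1 else 0) + (if 1 - θ < u then 1 else 0)) / 2

lemma thresholdRound_eq_zero_or_half_or_one (θ u : ℝ) :
    thresholdRound θ u = 0 ∨ thresholdRound θ u = 1 / 2 ∨ thresholdRound θ u = 1 := by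
  unfold thresholdRound; split_ifs <;> norm_num

lemma thresholdRound_mem_Icc (θ u : ℝ) : thresholdRound θ u ∈ Icc (0 : ℝ) 1 := by
  rcases thresholdRound_eq_zero_or_half_or_one θ u with h | h | h <;> rw [h] <;> norm_num

lemma one_le_thresholdRound_add {u v : ℝ} (θ : ℝ) (huv : 1 ≤ u + v) :
    1 ≤ thresholdRound θ u + thresholdRound θ v := by
  unfold thresholdRound; split_ifs <;> linarith

lemma measurable_thresholdRound : Measurable (Function.uncurry thresholdRound) :=
  ((Measurable.ite (measurableSet_le measurable_fst measurable_snd) measurable_const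
    measurable_const).add (Measurable.ite (measurableSet_lt (measurable_const.sub measurable_fst)
      measurable_snd) measurable_const measurable_const)).div_const _

lemma thresholdRound_eq_indicator (θ u : ℝ) :
    thresholdRound θ u = ((Iic u).indicator 1 θ + (Ioi (1 - u)).indicator 1 θ) / 2 := by
  simp only [thresholdRound, indicator, mem_Iic, mem_Ioi, sub_lt_comm, Pi.one_apply]

lemma integral_thresholdRound {u : ℝ} (hu : u ∈ Icc (0 : ℝ) 1) :
    ∫ θ in Ioc 0 1, thresholdRound θ u = u := by
  have h₁ : ∫ θ in Ioc (0 : ℝ) 1, (Iic u).indicator 1 θ = u := by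
    rw [integral_indicator_one measurableSet_Iic, measureReal_restrict_apply measurableSet_Iic,
      Iic_inter_Ioc_of_le hu.2, Real.volume_real_Ioc_of_le hu.1, sub_zero]
  have h₂ : ∫ θ in Ioc (0 : ℝ) 1, (Ioi (1 - u)).indicator 1 θ = u := by
    rw [integral_indicator_one measurableSet_Ioi, measureReal_restrict_apply measurableSet_Ioi,
      inter_comm, Ioc_inter_Ioi, sup_of_le_right (by linarith [hu.2]),
      Real.volume_real_Ioc_of_le (by linarith [hu.1])]
    ring
  simp_rw [thresholdRound_eq_indicator]
  rw [integral_div, integral_add ((integrable_const 1).indicator measurableSet_Iic)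
    ((integrable_const 1).indicator measurableSet_Ioi), h₁, h₂]
  ring

section

variable {Ω : Type*} [MeasurableSpace Ω] {ν : Measure Ω} {W : Ω → Ω → ℝ}

lemma IsFracCover.thresholdRound {c : Ω → ℝ} (hc : IsFracCover ν W c) (θ : ℝ) :
    IsFracCover ν W (fun x => thresholdRound θ (c x)) :=
  ⟨measurable_thresholdRound.comp (measurable_const.prodMk hc.1),
    fun x => thresholdRound_mem_Icc θ (c x),
    hc.2.2.mono fun _ hcov hpos => one_le_thresholdRound_add θ (hcov hpos)⟩

lemma exists_integral_thresholdRound_le [IsProbabilityMeasure ν] {c : Ω → ℝ} (hc : Measurable c)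
    (hc01 : ∀ x, c x ∈ Icc (0 : ℝ) 1) :
    ∃ θ, ∫ x, thresholdRound θ (c x) ∂ν ≤ ∫ x, c x ∂ν := by
  have : IsProbabilityMeasure (volume.restrict (Ioc (0 : ℝ) 1)) := ⟨by simp⟩
  have hf : Integrable (fun p : ℝ × Ω => thresholdRound p.1 (c p.2))
      ((volume.restrict (Ioc (0 : ℝ) 1)).prod ν) :=
    Integrable.of_bound (measurable_thresholdRound.comp
      (measurable_fst.prodMk (hc.comp measurable_snd))).aestronglyMeasurable 1
      (ae_of_all _ fun p => abs_le.mpr ⟨by linarith [(thresholdRound_mem_Icc p.1 (c p.2)).1],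
        (thresholdRound_mem_Icc p.1 (c p.2)).2⟩)
  obtain ⟨θ, hθ⟩ := exists_le_integral hf.integral_prod_left
  refine ⟨θ, hθ.trans_eq ?_⟩
  rw [integral_integral_swap (f := fun θ x => thresholdRound θ (c x)) hf]
  exact integral_congr_ae (ae_of_all _ fun x => integral_thresholdRound (hc01 x))

lemma integral_graphon_le_of_isFracCover [IsProbabilityMeasure ν] (hW : IsGraphon W) {c : Ω → ℝ}
    (hc : IsFracCover ν W c) :
    ∫ p, W p.1 p.2 ∂(ν.prod ν) ≤ 1 - ν.real (c ⁻¹' {0}) * (ν.real (c ⁻¹' {0}) +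
      ν.real (c ⁻¹' {1 / 2})) - ν.real (c ⁻¹' {1 / 2}) * ν.real (c ⁻¹' {0}) := by
  set Z := c ⁻¹' {0}
  set M := c ⁻¹' {1 / 2}
  have hZ : MeasurableSet Z := hc.1 (measurableSet_singleton 0)
  have hM : MeasurableSet M := hc.1 (measurableSet_singleton _)
  have hZM : Disjoint Z M := (disjoint_singleton.2 (by norm_num)).preimage c
  set B := Z ×ˢ (Z ∪ M) ∪ M ×ˢ Z
  have hB : MeasurableSet B := (hZ.prod (hZ.union hM)).union (hM.prod hZ)
  have hWB : ∀ᵐ p ∂(ν.prod ν), W p.1 p.2 ≤ Bᶜ.indicator 1 p := by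
    filter_upwards [hc.2.2] with p hcov
    by_cases hpB : p ∈ B
    · rw [indicator_of_notMem (not_not_intro hpB)]
      refine not_lt.1 fun hpos => ?_
      have := hcov hpos
      rcases hpB with ⟨h₁, h₂ | h₂⟩ | ⟨h₁, h₂⟩ <;> simp_all [Z, M] <;> norm_num at this
    · rw [indicator_of_mem hpB]; exact (hW.2.2 _ _).2
  have hWint : Integrable (fun p : Ω × Ω => W p.1 p.2) (ν.prod ν) :=
    Integrable.of_bound hW.1.aestronglyMeasurable 1
      (ae_of_all _ fun p => abs_le.mpr ⟨by linarith [(hW.2.2 p.1 p.2).1], (hW.2.2 p.1 p.2).2⟩)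
  calc ∫ p, W p.1 p.2 ∂(ν.prod ν) ≤ ∫ p, Bᶜ.indicator 1 p ∂(ν.prod ν) :=
        integral_mono_ae hWint ((integrable_const 1).indicator hB.compl) hWB
    _ = 1 - (ν.prod ν).real B := by
        rw [integral_indicator_one hB.compl, probReal_compl_eq_one_sub hB]
    _ = _ := by
        rw [measureReal_union (Disjoint.set_prod_left hZM _ _) (hM.prod hZ),
          measureReal_prod_prod, measureReal_prod_prod, measureReal_union hZM hM]
        ring

lemma integral_eq_of_halfIntegral [IsProbabilityMeasure ν] {h : Ω → ℝ} (hm : Measurable h)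
    (hhalf : ∀ x, h x = 0 ∨ h x = 1 / 2 ∨ h x = 1) :
    ∫ x, h x ∂ν = 1 - ν.real (h ⁻¹' {0}) - ν.real (h ⁻¹' {1 / 2}) / 2 := by
  have hZ : MeasurableSet (h ⁻¹' {0}) := hm (measurableSet_singleton 0)
  have hM : MeasurableSet (h ⁻¹' {1 / 2}) := hm (measurableSet_singleton _)
  have hpt : ∀ x, h x = 1 - (h ⁻¹' {0}).indicator 1 x - (h ⁻¹' {1 / 2}).indicator 1 x / 2 := by
    intro x; rcases hhalf x with hx | hx | hx <;> norm_num [indicator, hx]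
  have hZi : Integrable ((h ⁻¹' {0}).indicator (1 : Ω → ℝ)) ν :=
    (integrable_const 1).indicator hZ
  have hMi : Integrable ((h ⁻¹' {1 / 2}).indicator (1 : Ω → ℝ)) ν :=
    (integrable_const 1).indicator hM
  simp_rw [hpt]
  rw [integral_sub (f := fun x => 1 - (h ⁻¹' {0}).indicator 1 x) ((integrable_const 1).sub hZi)
      (hMi.div_const 2),
    integral_sub (integrable_const 1) hZi, integral_div,
    integral_indicator_one hZ, integral_indicator_one hM]
  simp

lemma min_sqrt_le_integral_of_halfIntegral [IsProbabilityMeasure ν] (hW : IsGraphon W)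
    {h : Ω → ℝ} (hh : IsFracCover ν W h) (hhalf : ∀ x, h x = 0 ∨ h x = 1 / 2 ∨ h x = 1) :
    min (√((∫ p, W p.1 p.2 ∂(ν.prod ν)) / 4)) (1 - √(1 - ∫ p, W p.1 p.2 ∂(ν.prod ν))) ≤
      ∫ x, h x ∂ν := by
  have hZM : Disjoint (h ⁻¹' {0}) (h ⁻¹' {1 / 2}) :=
    (disjoint_singleton.2 (by norm_num)).preimage h
  rw [integral_eq_of_halfIntegral hh.1 hhalf]
  refine min_sqrt_le_one_sub measureReal_nonneg ?_ (integral_graphon_le_of_isFracCover hW hh)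
  rw [← measureReal_union hZM (hh.1 (measurableSet_singleton _))]
  exact measureReal_le_one

end

theorem stmt_9_general {Ω : Type*} [MeasurableSpace Ω] (ν : Measure Ω) [IsProbabilityMeasure ν]
    (W : Ω → Ω → ℝ) (hW : IsGraphon W)
    (e : ℝ) (he : e = ∫ p, W p.1 p.2 ∂(ν.prod ν)) :
    min (Real.sqrt (e / 4)) (1 - Real.sqrt (1 - e)) ≤ fracCoverNumber ν W := by
  have hone : IsFracCover ν W 1 :=
    ⟨measurable_const, fun _ => by simp, ae_of_all _ fun _ _ => by norm_num⟩
  refine le_csInf ⟨_, 1, hone, rfl⟩ ?_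
  rintro _ ⟨c, hc, rfl⟩
  obtain ⟨θ, hθ⟩ := exists_integral_thresholdRound_le (ν := ν) hc.1 hc.2.1
  subst he
  exact (min_sqrt_le_integral_of_halfIntegral hW (hc.thresholdRound θ)
    fun x => thresholdRound_eq_zero_or_half_or_one θ (c x)).trans hθ

theorem stmt_9 {Ω : Type*} [MeasurableSpace Ω] (ν : Measure Ω) [IsProbabilityMeasure ν]
    [NullSingletonClass ν] (W : Ω → Ω → ℝ) (hW : IsGraphon W)
    (e : ℝ) (he : e = ∫ p, W p.1 p.2 ∂(ν.prod ν)) :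
    min (Real.sqrt (e / 4)) (1 - Real.sqrt (1 - e)) ≤ fracCoverNumber ν W :=
  stmt_9_general ν W hW e he
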